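/- For a forecast given as the Gaussian distribution N(μ, σ²) and observation y, the continuous ranked probability score CRPS(N(μ,σ²), y) = ∫_ℝ (Φ((x-μ)/σ) - H(x ≥ y))² dx equals σ ( ω(2Φ(ω) - 1) + 2φ(ω) - 1/√π ), where ω = (y - μ)/σ, Φ and φ are the standard normal CDF and PDF, and H is the Heaviside step function. -/

import Mathlib

/-!
Both pieces of the integrand, `Φ²` on `(-∞, ω)` and `(Φ - 1)²` on `[ω, ∞)`, have the explicit
antiderivative `t (Φ - c)² + 2 (Φ - c) φ - Φ(√2 t) / √π` (with `c = 0`, resp. `c = 1`), so the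
integral is a difference of boundary values. The reflection `Φ(-t) = 1 - Φ(t)` exchanges the two
tails, so a single decay estimate `Φ(t) ≤ e^{t + 1/2}` at `-∞` settles both limits at infinity.
The affine substitution `x = μ + σ t` reduces the general case to `μ = 0`, `σ = 1`.
-/

open Real MeasureTheory

/-- The standard normal probability density function. -/
noncomputable def stdNormalPDF (s : ℝ) : ℝ := (Real.sqrt (2 * π))⁻¹ * Real.exp (-s ^ 2 / 2)

/-- The standard normal cumulative distribution function. -/
noncomputable def stdNormalCDF (t : ℝ) : ℝ := ∫ s in Set.Iic t, stdNormalPDF s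

open Set Filter Topology ProbabilityTheory

lemma stdNormalPDF_eq_gaussianPDFReal : stdNormalPDF = gaussianPDFReal 0 1 := by
  ext s
  simp [stdNormalPDF, gaussianPDFReal]

lemma stdNormalPDF_pos (s : ℝ) : 0 < stdNormalPDF s := by
  rw [stdNormalPDF_eq_gaussianPDFReal]
  exact gaussianPDFReal_pos _ _ _ one_ne_zero

lemma stdNormalPDF_neg (s : ℝ) : stdNormalPDF (-s) = stdNormalPDF s := by
  simp [stdNormalPDF]

lemma continuous_stdNormalPDF : Continuous stdNormalPDF := by
  unfold stdNormalPDF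
  fun_prop

lemma integrable_stdNormalPDF : Integrable stdNormalPDF :=
  stdNormalPDF_eq_gaussianPDFReal ▸ integrable_gaussianPDFReal 0 1

lemma integral_stdNormalPDF : ∫ s, stdNormalPDF s = 1 :=
  stdNormalPDF_eq_gaussianPDFReal ▸ integral_gaussianPDFReal_eq_one 0 one_ne_zero

lemma hasDerivAt_stdNormalPDF (t : ℝ) : HasDerivAt stdNormalPDF (-t * stdNormalPDF t) t := by
  have h := (((hasDerivAt_pow 2 t).neg.div_const 2).exp).const_mul (√(2 * π))⁻¹
  refine h.congr_deriv ?_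
  simp only [stdNormalPDF, Pi.neg_apply]
  push_cast
  ring

lemma stdNormalPDF_sq (t : ℝ) :
    stdNormalPDF t ^ 2 = (√(2 * π))⁻¹ * stdNormalPDF (√2 * t) := by
  have hexp : rexp (-t ^ 2 / 2) ^ 2 = rexp (-(√2 * t) ^ 2 / 2) := by
    rw [← Real.exp_nat_mul, mul_pow, sq_sqrt zero_le_two]
    ring_nf
  rw [stdNormalPDF, stdNormalPDF, mul_pow, hexp, inv_pow, sq]
  ring

lemma hasDerivAt_stdNormalCDF (t : ℝ) : HasDerivAt stdNormalCDF (stdNormalPDF t) t := by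
  have hΦ : ∀ u, stdNormalCDF u = stdNormalCDF 0 + ∫ s in (0 : ℝ)..u, stdNormalPDF s := by
    intro u
    rw [stdNormalCDF, stdNormalCDF, ← intervalIntegral.integral_Iic_sub_Iic
      integrable_stdNormalPDF.integrableOn integrable_stdNormalPDF.integrableOn]
    ring
  rw [funext hΦ]
  exact (intervalIntegral.integral_hasDerivAt_right integrable_stdNormalPDF.intervalIntegrable
    (continuous_stdNormalPDF.stronglyMeasurableAtFilter _ _)
    continuous_stdNormalPDF.continuousAt).const_add _

lemma stdNormalCDF_nonneg (t : ℝ) : 0 ≤ stdNormalCDF t :=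
  setIntegral_nonneg measurableSet_Iic fun s _ => (stdNormalPDF_pos s).le

lemma stdNormalCDF_neg (t : ℝ) : stdNormalCDF (-t) = 1 - stdNormalCDF t := by
  have h := intervalIntegral.integral_Iic_add_Ioi (b := t)
    integrable_stdNormalPDF.integrableOn integrable_stdNormalPDF.integrableOn
  rw [integral_stdNormalPDF] at h
  rw [stdNormalCDF, stdNormalCDF, ← integral_comp_neg_Ioi]
  simp only [stdNormalPDF_neg]
  linarith

lemma stdNormalPDF_le_mul_exp (s : ℝ) : stdNormalPDF s ≤ rexp (1 / 2) * rexp s := by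
  have hinv : (√(2 * π))⁻¹ ≤ 1 :=
    inv_le_one_of_one_le₀ (one_le_sqrt.2 (by nlinarith [pi_gt_three]))
  rw [stdNormalPDF, ← Real.exp_add]
  calc (√(2 * π))⁻¹ * rexp (-s ^ 2 / 2) ≤ 1 * rexp (-s ^ 2 / 2) := by gcongr
    _ ≤ rexp (1 / 2 + s) := by
      rw [one_mul, exp_le_exp]
      nlinarith [sq_nonneg (s + 1)]

lemma stdNormalCDF_le_mul_exp (t : ℝ) : stdNormalCDF t ≤ rexp (1 / 2) * rexp t := by
  calc stdNormalCDF t ≤ ∫ s in Iic t, rexp (1 / 2) * rexp s :=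
        setIntegral_mono_on integrable_stdNormalPDF.integrableOn
          ((integrableOn_exp_Iic t).const_mul _) measurableSet_Iic
          fun s _ => stdNormalPDF_le_mul_exp s
    _ = rexp (1 / 2) * rexp t := by rw [integral_const_mul, integral_exp_Iic]

lemma tendsto_mul_exp_atBot : Tendsto (fun t => t * rexp t) atBot (𝓝 0) := by
  have h := ((tendsto_pow_mul_exp_neg_atTop_nhds_zero 1).comp tendsto_neg_atBot_atTop).neg
  simpa [Function.comp_def] using h

section ExpBound

variable {f : ℝ → ℝ} {C : ℝ}

lemma tendsto_atBot_of_le_mul_exp (hf0 : ∀ t, 0 ≤ f t) (hf : ∀ t, f t ≤ C * rexp t) :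
    Tendsto f atBot (𝓝 0) := by
  have h := (tendsto_exp_atBot.const_mul C)
  rw [mul_zero] at h
  exact tendsto_of_tendsto_of_tendsto_of_le_of_le tendsto_const_nhds h hf0 hf

lemma tendsto_mul_atBot_of_le_mul_exp (hf0 : ∀ t, 0 ≤ f t) (hf : ∀ t, f t ≤ C * rexp t) :
    Tendsto (fun t => t * f t) atBot (𝓝 0) := by
  have h := (tendsto_mul_exp_atBot.abs.const_mul C)
  rw [abs_zero, mul_zero] at h
  refine squeeze_zero_norm (fun t => ?_) h
  rw [norm_mul, norm_eq_abs, norm_of_nonneg (hf0 t), abs_mul, abs_of_pos (exp_pos t)]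
  nlinarith [abs_nonneg t, hf t]

end ExpBound

/- Integrating by parts, `∫ Φ² = t Φ² - 2 ∫ t Φ φ = t Φ² + 2 Φ φ - 2 ∫ φ²`, and
`2 φ(t)² = √2 φ(√2 t) / √π`. -/
noncomputable def crpsAntideriv (c t : ℝ) : ℝ :=
  t * (stdNormalCDF t - c) ^ 2 + 2 * (stdNormalCDF t - c) * stdNormalPDF t
    - (√π)⁻¹ * stdNormalCDF (√2 * t)

lemma hasDerivAt_crpsAntideriv (c t : ℝ) :
    HasDerivAt (crpsAntideriv c) ((stdNormalCDF t - c) ^ 2) t := by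
  have hΦ := (hasDerivAt_stdNormalCDF t).sub_const c
  have hΦ₂ := (hasDerivAt_stdNormalCDF (√2 * t)).comp t ((hasDerivAt_id t).const_mul √2)
  have h := (((hasDerivAt_id t).mul (hΦ.pow 2)).add ((hΦ.const_mul 2).mul
    (hasDerivAt_stdNormalPDF t))).sub (hΦ₂.const_mul (√π)⁻¹)
  refine h.congr_deriv ?_
  have hsqrt : √(2 * π) = √2 * √π := sqrt_mul zero_le_two π
  have hφ₂ : (√π)⁻¹ * (√2 * stdNormalPDF (√2 * t)) = 2 * stdNormalPDF t ^ 2 := by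
    rw [stdNormalPDF_sq, hsqrt]
    field_simp
    rw [sq_sqrt zero_le_two]
    ring
  simp only [id, mul_one, Pi.pow_apply] at hφ₂ ⊢
  push_cast
  linear_combination -hφ₂

lemma crpsAntideriv_one_neg (t : ℝ) :
    crpsAntideriv 1 (-t) = -crpsAntideriv 0 t - (√π)⁻¹ := by
  simp only [crpsAntideriv, stdNormalCDF_neg, stdNormalPDF_neg, mul_neg]
  ring

lemma tendsto_crpsAntideriv_zero_atBot : Tendsto (crpsAntideriv 0) atBot (𝓝 0) := by
  have hΦ := tendsto_atBot_of_le_mul_exp stdNormalCDF_nonneg stdNormalCDF_le_mul_exp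
  have hφ := tendsto_atBot_of_le_mul_exp (fun t => (stdNormalPDF_pos t).le) stdNormalPDF_le_mul_exp
  have htΦ := tendsto_mul_atBot_of_le_mul_exp stdNormalCDF_nonneg stdNormalCDF_le_mul_exp
  have hΦ₂ := hΦ.comp ((tendsto_const_mul_atBot_of_pos (sqrt_pos.2 zero_lt_two)).2 tendsto_id)
  have h := ((htΦ.mul hΦ).add ((hΦ.const_mul 2).mul hφ)).sub (hΦ₂.const_mul (√π)⁻¹)
  simp only [mul_zero, add_zero, sub_zero] at h
  refine h.congr fun t => ?_
  simp only [crpsAntideriv, Function.comp_def, id]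
  ring

lemma tendsto_crpsAntideriv_one_atTop :
    Tendsto (crpsAntideriv 1) atTop (𝓝 (-(√π)⁻¹)) := by
  have h :=
    (tendsto_crpsAntideriv_zero_atBot.comp tendsto_neg_atTop_atBot).neg.sub_const (√π)⁻¹
  rw [neg_zero, zero_sub] at h
  refine h.congr fun t => ?_
  rw [Function.comp_apply, ← neg_neg t, crpsAntideriv_one_neg, neg_neg]

lemma integrableOn_Ioi_sq_stdNormalCDF_sub_one (a : ℝ) :
    IntegrableOn (fun t => (stdNormalCDF t - 1) ^ 2) (Ioi a) :=
  integrableOn_Ioi_deriv_of_nonneg' (fun t _ => hasDerivAt_crpsAntideriv 1 t)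
    (fun _ _ => sq_nonneg _) tendsto_crpsAntideriv_one_atTop

lemma integral_Ioi_sq_stdNormalCDF_sub_one (a : ℝ) :
    ∫ t in Ioi a, (stdNormalCDF t - 1) ^ 2 = -(√π)⁻¹ - crpsAntideriv 1 a :=
  integral_Ioi_of_hasDerivAt_of_nonneg' (fun t _ => hasDerivAt_crpsAntideriv 1 t)
    (fun _ _ => sq_nonneg _) tendsto_crpsAntideriv_one_atTop

lemma sq_stdNormalCDF_eq_sq_stdNormalCDF_neg_sub_one (t : ℝ) :
    stdNormalCDF t ^ 2 = (stdNormalCDF (-t) - 1) ^ 2 := by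
  rw [stdNormalCDF_neg]
  ring

lemma integrableOn_Iio_sq_stdNormalCDF (a : ℝ) :
    IntegrableOn (fun t => stdNormalCDF t ^ 2) (Iio a) := by
  simp_rw [sq_stdNormalCDF_eq_sq_stdNormalCDF_neg_sub_one]
  exact (integrableOn_Ioi_sq_stdNormalCDF_sub_one (-a)).comp_neg_Iio

lemma integral_Iio_sq_stdNormalCDF (a : ℝ) :
    ∫ t in Iio a, stdNormalCDF t ^ 2 = crpsAntideriv 0 a := by
  simp_rw [sq_stdNormalCDF_eq_sq_stdNormalCDF_neg_sub_one]
  rw [← integral_Iic_eq_integral_Iio,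
    integral_comp_neg_Iic (f := fun t => (stdNormalCDF t - 1) ^ 2),
    integral_Ioi_sq_stdNormalCDF_sub_one, crpsAntideriv_one_neg]
  ring

lemma integral_sq_stdNormalCDF_sub_heaviside (ω : ℝ) :
    ∫ t, (stdNormalCDF t - if ω ≤ t then (1 : ℝ) else 0) ^ 2 =
      ω * (2 * stdNormalCDF ω - 1) + 2 * stdNormalPDF ω - (√π)⁻¹ := by
  set g := fun t => (stdNormalCDF t - if ω ≤ t then (1 : ℝ) else 0) ^ 2
  have hIio : EqOn g (fun t => stdNormalCDF t ^ 2) (Iio ω) := fun t ht => by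
    simp [g, not_le.2 (mem_Iio.1 ht)]
  have hIci : EqOn g (fun t => (stdNormalCDF t - 1) ^ 2) (Ici ω) := fun t ht => by
    simp [g, mem_Ici.1 ht]
  have hgIio : IntegrableOn g (Iio ω) :=
    (integrableOn_Iio_sq_stdNormalCDF ω).congr_fun hIio.symm measurableSet_Iio
  have hgIci : IntegrableOn g (Ici ω) :=
    ((integrableOn_Ici_iff_integrableOn_Ioi enorm_ne_top).2
      (integrableOn_Ioi_sq_stdNormalCDF_sub_one ω)).congr_fun
      hIci.symm measurableSet_Ici
  rw [← intervalIntegral.integral_Iio_add_Ici hgIio hgIci,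
    setIntegral_congr_fun measurableSet_Iio hIio,
    setIntegral_congr_fun measurableSet_Ici hIci, integral_Ici_eq_integral_Ioi,
    integral_Iio_sq_stdNormalCDF, integral_Ioi_sq_stdNormalCDF_sub_one]
  simp only [crpsAntideriv]
  ring

lemma integral_comp_sub_div {E : Type*} [NormedAddCommGroup E] [NormedSpace ℝ E] (g : ℝ → E)
    (μ σ : ℝ) : ∫ x, g ((x - μ) / σ) = |σ| • ∫ t, g t := by
  rw [integral_sub_right_eq_self (fun x => g (x / σ)) μ, Measure.integral_comp_div]

/-- Closed form of the CRPS of a Gaussian forecast `N(μ, σ²)` against observation `y`: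
`∫ (Φ((x-μ)/σ) - H(x ≥ y))² dx = σ (ω(2Φ(ω)-1) + 2φ(ω) - 1/√π)` with `ω = (y-μ)/σ`. -/
theorem crps_gaussian (μ σ y : ℝ) (hσ : 0 < σ) :
    (∫ x : ℝ, (stdNormalCDF ((x - μ) / σ) - (if y ≤ x then (1 : ℝ) else 0)) ^ 2) =
      σ * ((y - μ) / σ * (2 * stdNormalCDF ((y - μ) / σ) - 1) +
        2 * stdNormalPDF ((y - μ) / σ) - (Real.sqrt π)⁻¹) := by
  have hle : ∀ x, y ≤ x ↔ (y - μ) / σ ≤ (x - μ) / σ := fun x => by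
    rw [div_le_div_iff_of_pos_right hσ, sub_le_sub_iff_right]
  simp_rw [hle]
  rw [integral_comp_sub_div
      fun t => (stdNormalCDF t - if (y - μ) / σ ≤ t then (1 : ℝ) else 0) ^ 2,
    integral_sq_stdNormalCDF_sub_heaviside, abs_of_pos hσ, smul_eq_mul]
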